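/- arXiv:2305.09742 — 6 statements merged into one kernel-verified Lean document; each statement's English description precedes it below -/
import Mathlib

section
/- If a metric space X has barycentres and a group G acts on X by isometries, then for every g ∈ G the infimal displacement |g| = inf{d(x,gx) : x ∈ X} equals the stable translation length τ_X(g). -/
open Filter Topology

/-- A metric space has barycentres if for each `n` there is an idempotent, symmetric,
`Isom(X)`-invariant, `(1/n)`-Lipschitz map `Xⁿ → X`. -/
structure Barycenters (X : Type*) [MetricSpace X] where
  b : ∀ n : ℕ, (Fin n → X) → X
  idem : ∀ (n : ℕ), 0 < n → ∀ x : X, b n (fun _ => x) = x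
  symm : ∀ (n : ℕ) (σ : Equiv.Perm (Fin n)) (x : Fin n → X), b n (x ∘ σ) = b n x
  isom_inv : ∀ (n : ℕ) (e : X ≃ᵢ X) (x : Fin n → X), e (b n x) = b n (fun i => e (x i))
  lip : ∀ (n : ℕ), 0 < n → ∀ x y : Fin n → X,
    dist (b n x) (b n y) ≤ (1 / n) * ∑ i, dist (x i) (y i)

/-! Idea: the barycentre `xₙ` of the orbit segment `x, gx, …, gⁿ⁻¹x` is moved by `g` to the
barycentre of `gx, …, gⁿx`, which agrees with a cyclic rotation of the first segment except at a
single index; the `(1/n)`-Lipschitz property then gives `d(xₙ, gxₙ) ≤ d(x, gⁿx)/n`, so the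
infimal displacement is at most the stable translation length. Conversely
`d(x, gⁿx) ≤ n d(x, gx)` by the triangle inequality. -/

theorem dist_pow_smul_le {M X : Type*} [Monoid M] [PseudoMetricSpace X] [MulAction M X]
    [IsIsometricSMul M X] (c : M) (x : X) (n : ℕ) : dist x (c ^ n • x) ≤ n * dist x (c • x) := by
  induction n with
  | zero => simp
  | succ n ih =>
    calc dist x (c ^ (n + 1) • x) ≤ dist x (c ^ n • x) + dist (c ^ n • x) (c ^ n • c • x) := by
          rw [pow_succ, mul_smul]; exact dist_triangle _ _ _
      _ ≤ n * dist x (c • x) + dist x (c • x) := by rw [dist_smul]; gcongr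
      _ = (n + 1 : ℕ) * dist x (c • x) := by push_cast; ring

namespace Barycenters

variable {G X : Type*} [Group G] [MetricSpace X] [MulAction G X] (B : Barycenters X)

def orbitBarycenter (g : G) (x : X) (n : ℕ) : X :=
  B.b n fun i => g ^ (i : ℕ) • x

variable [IsIsometricSMul G X]

theorem smul_orbitBarycenter (g : G) (x : X) (n : ℕ) :
    g • B.orbitBarycenter g x n = B.b n fun i => g ^ ((i : ℕ) + 1) • x := by
  simpa [orbitBarycenter, smul_smul, ← pow_succ'] using
    B.isom_inv n (IsometryEquiv.constSMul g) fun i => g ^ (i : ℕ) • x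

theorem dist_orbitBarycenter_smul_le (g : G) (x : X) {n : ℕ} (hn : 0 < n) :
    dist (B.orbitBarycenter g x n) (g • B.orbitBarycenter g x n) ≤ dist x (g ^ n • x) / n := by
  obtain ⟨m, rfl⟩ := Nat.exists_eq_add_one_of_ne_zero hn.ne'
  rw [smul_orbitBarycenter, orbitBarycenter, ← B.symm _ (finRotate (m + 1))]
  have hsum : ∑ i, dist (g ^ (finRotate (m + 1) i : ℕ) • x) (g ^ ((i : ℕ) + 1) • x) =
      dist x (g ^ (m + 1) • x) := by
    simp [Fin.sum_univ_castSucc]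
  calc _ ≤ 1 / (m + 1 : ℕ) *
          ∑ i, dist (g ^ (finRotate (m + 1) i : ℕ) • x) (g ^ ((i : ℕ) + 1) • x) :=
        B.lip _ hn _ _
    _ = _ := by rw [hsum, one_div_mul_eq_div]

end Barycenters

/-- In a space with barycentres, the infimal displacement of every group element acting
by isometries equals its stable translation length. -/
theorem infDisplacement_eq_translation_length
    {G X : Type*} [Group G] [MetricSpace X] [Nonempty X] [MulAction G X]
    (B : Barycenters X)
    (hiso : ∀ (g : G) (x y : X), dist (g • x) (g • y) = dist x y)
    (g : G) (τ : ℝ)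
    (hτ : ∀ x : X, Tendsto (fun n : ℕ => dist x (g ^ n • x) / n) atTop (𝓝 τ)) :
    (⨅ x : X, dist x (g • x)) = τ := by
  have : IsIsometricSMul G X := ⟨fun g => Isometry.of_dist_eq (hiso g)⟩
  obtain ⟨x₀⟩ := ‹Nonempty X›
  have hbdd : BddBelow (Set.range fun x : X => dist x (g • x)) :=
    ⟨0, by rintro _ ⟨x, rfl⟩; exact dist_nonneg⟩
  apply le_antisymm
  · refine ge_of_tendsto (hτ x₀) (eventually_atTop.2 ⟨1, fun n hn => ?_⟩)
    exact (ciInf_le hbdd _).trans (B.dist_orbitBarycenter_smul_le g x₀ hn)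
  · refine le_ciInf fun x => le_of_tendsto (hτ x) (eventually_atTop.2 ⟨1, fun n hn => ?_⟩)
    rw [div_le_iff₀ (by exact_mod_cast hn), mul_comm]
    exact dist_pow_smul_le g x n
end

section
/- Let G act by isometries on a metric space X with barycentres, and suppose the action is acylindrical. Then there exists δ > 0 such that every g ∈ G whose cyclic subgroup ⟨g⟩ has unbounded orbits in X satisfies τ_X(g) > δ. -/
open Filter Topology

/-- For an acylindrical action by isometries on a space with barycentres, there is a
uniform `δ > 0` bounding below the stable translation length of every element whose
cyclic subgroup has unbounded orbits. -/
theorem acylindrical_barycenters_translation_discrete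
    {G X : Type*} [Group G] [MetricSpace X] [MulAction G X]
    (B : Barycenters X)
    (hiso : ∀ (g : G) (x y : X), dist (g • x) (g • y) = dist x y)
    (hacyl : ∀ ε : ℝ, 0 < ε → ∃ (R : ℝ) (N : ℕ), ∀ x y : X, dist x y > R →
      {h : G | dist x (h • x) ≤ ε ∧ dist y (h • y) ≤ ε}.Finite ∧
      {h : G | dist x (h • x) ≤ ε ∧ dist y (h • y) ≤ ε}.ncard ≤ N) :
    ∃ δ : ℝ, 0 < δ ∧ ∀ g : G,
      (∃ x : X, ¬ Bornology.IsBounded (Set.range fun n : ℤ => g ^ n • x)) →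
      ∀ (τ : ℝ) (x : X),
        Tendsto (fun n : ℕ => dist x (g ^ n • x) / n) atTop (𝓝 τ) → δ < τ := by
  obtain ⟨R, N, hRN⟩ := hacyl 1 one_pos
  refine ⟨1 / (2 * (N + 2)), by positivity, ?_⟩
  rintro g ⟨x, hx⟩ τ x₀ hτ
  by_contra hle
  push_neg at hle
  -- barycentre maps are equivariant
  have hbar : ∀ (h : G) (n : ℕ) (w : Fin n → X),
      h • B.b n w = B.b n (fun i => h • w i) :=
    fun h n w => B.isom_inv n ⟨MulAction.toPerm h, Isometry.of_dist_eq (hiso h)⟩ w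
  -- g has infinite order
  have hkey : ∀ a b : ℕ, a < b → g ^ a = g ^ b → IsOfFinOrder g := by
    intro a b h hab
    refine isOfFinOrder_iff_pow_eq_one.2 ⟨b - a, by omega, ?_⟩
    have h1 : g ^ (b - a) * g ^ a = g ^ a := by
      rw [← pow_add, Nat.sub_add_cancel h.le, ← hab]
    exact mul_right_cancel (h1.trans (one_mul _).symm)
  have hinj : Function.Injective (fun k : ℕ => g ^ k) := by
    intro a b hab
    by_contra hne
    have hfin : IsOfFinOrder g := by
      rcases lt_or_gt_of_ne hne with h | h
      · exact hkey a b h hab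
      · exact hkey b a h hab.symm
    have hset : (Set.range fun n : ℤ => g ^ n • x).Finite := by
      have h1 : ((Subgroup.zpowers g : Set G)).Finite := hfin.finite_zpowers
      have h2 : (Set.range fun n : ℤ => g ^ n • x) ⊆
          (fun h : G => h • x) '' (Subgroup.zpowers g) := by
        rintro _ ⟨n, rfl⟩; exact ⟨g ^ n, ⟨n, rfl⟩, rfl⟩
      exact (h1.image _).subset h2
    exact hx hset.isBounded
  -- choose n with dist x₀ (g^n x₀)/n < 1/(N+2)
  have hlt : τ < 1 / ((N : ℝ) + 2) := by
    refine lt_of_le_of_lt hle ?_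
    rw [div_lt_div_iff₀ (by positivity) (by positivity)]
    nlinarith [ (0:ℝ) ≤ (N:ℝ), Nat.cast_nonneg (α := ℝ) N ]
  obtain ⟨n, hn1, hn2⟩ :=
    ((hτ.eventually_lt_const hlt).and (eventually_ge_atTop 1)).exists
  obtain ⟨m, rfl⟩ : ∃ m, n = m + 1 := ⟨n - 1, by omega⟩
  -- the barycentre point
  set z : X := B.b (m + 1) (fun i : Fin (m + 1) => g ^ (i : ℕ) • x₀) with hz_def
  have hzg : dist z (g • z) ≤ dist x₀ (g ^ (m + 1) • x₀) / (m + 1) := by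
    have h1 : g • z = B.b (m + 1) (fun i : Fin (m + 1) => g ^ ((i : ℕ) + 1) • x₀) := by
      rw [hz_def, hbar]
      congr 1
      funext i
      rw [pow_succ', mul_smul]
    have h2 : z = B.b (m + 1)
        ((fun i : Fin (m + 1) => g ^ (i : ℕ) • x₀) ∘ finRotate (m + 1)) :=
      (B.symm (m + 1) (finRotate (m + 1)) _).symm
    rw [h1, h2]
    calc dist (B.b (m + 1) ((fun i : Fin (m + 1) => g ^ (i : ℕ) • x₀) ∘ finRotate (m + 1)))
          (B.b (m + 1) (fun i : Fin (m + 1) => g ^ ((i : ℕ) + 1) • x₀))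
        ≤ (1 / ((m : ℝ) + 1)) * ∑ i : Fin (m + 1),
            dist (g ^ ((finRotate (m + 1) i : Fin (m+1)) : ℕ) • x₀) (g ^ ((i : ℕ) + 1) • x₀) := by
          have := B.lip (m + 1) (Nat.succ_pos m)
            ((fun i : Fin (m + 1) => g ^ (i : ℕ) • x₀) ∘ finRotate (m + 1))
            (fun i : Fin (m + 1) => g ^ ((i : ℕ) + 1) • x₀)
          simpa using this
      _ = (1 / ((m : ℝ) + 1)) * dist x₀ (g ^ (m + 1) • x₀) := by
          congr 1
          rw [Finset.sum_eq_single (Fin.last m)]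
          · rw [coe_finRotate]
            simp [Fin.val_last]
          · intro i _ hi
            rw [coe_finRotate, if_neg hi]
            simp
          · simp
      _ = dist x₀ (g ^ (m + 1) • x₀) / ((m : ℝ) + 1) := one_div_mul_eq_div _ _
  have hzsmall : dist z (g • z) < 1 / ((N : ℝ) + 2) := by
    refine lt_of_le_of_lt hzg ?_
    simpa using hn1
  -- iterated displacement
  have hiter : ∀ k : ℕ, dist z (g ^ k • z) ≤ k * dist z (g • z) := by
    intro k
    induction k with
    | zero => simp
    | succ k ih =>
      have hstep : g ^ (k + 1) • z = g • (g ^ k • z) := by rw [pow_succ', mul_smul]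
      calc dist z (g ^ (k + 1) • z)
          ≤ dist z (g • z) + dist (g • z) (g ^ (k + 1) • z) := dist_triangle _ _ _
        _ = dist z (g • z) + dist z (g ^ k • z) := by rw [hstep, hiso]
        _ ≤ dist z (g • z) + k * dist z (g • z) := by linarith
        _ = (k + 1 : ℕ) * dist z (g • z) := by push_cast; ring
  have hsmallk : ∀ k : ℕ, k ≤ N → dist z (g ^ k • z) ≤ 1 := by
    intro k hk
    refine le_trans (hiter k) ?_
    have h0 : (0:ℝ) ≤ dist z (g • z) := dist_nonneg
    have hkN : (k : ℝ) ≤ N := by exact_mod_cast hk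
    have : (k : ℝ) * dist z (g • z) ≤ (N : ℝ) * (1 / ((N : ℝ) + 2)) := by
      apply mul_le_mul hkN hzsmall.le h0 (Nat.cast_nonneg N)
    refine le_trans this ?_
    rw [mul_one_div, div_le_one (by positivity)]
    linarith
  -- unbounded orbit at z: find far point
  obtain ⟨p, hp⟩ : ∃ p : ℤ, R < dist z (g ^ p • z) := by
    by_contra h
    push_neg at h
    apply hx
    refine (Metric.isBounded_closedBall (x := x)
      (r := dist x z + R + dist z x)).subset ?_
    rintro _ ⟨p, rfl⟩
    rw [Metric.mem_closedBall]
    calc dist (g ^ p • x) x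
        ≤ dist (g ^ p • x) (g ^ p • z) + dist (g ^ p • z) z + dist z x :=
          dist_triangle4 _ _ _ _
      _ = dist x z + dist z (g ^ p • z) + dist z x := by rw [hiso, dist_comm (g ^ p • z)]
      _ ≤ dist x z + R + dist z x := by linarith [h p]
  set y : X := g ^ p • z with hy_def
  obtain ⟨hSfin, hScard⟩ := hRN z y hp
  set S : Set G := {h : G | dist z (h • z) ≤ 1 ∧ dist y (h • y) ≤ 1} with hS_def
  have hmem : ∀ k : ℕ, k ≤ N → g ^ k ∈ S := by
    intro k hk
    have hcomm : g ^ k * g ^ p = g ^ p * g ^ k := by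
      rw [← zpow_natCast g k, ← zpow_add, ← zpow_add, add_comm]
    have hyk : dist y (g ^ k • y) = dist z (g ^ k • z) := by
      rw [hy_def, smul_smul, hcomm, mul_smul, hiso]
    exact ⟨hsmallk k hk, by rw [hyk]; exact hsmallk k hk⟩
  -- counting contradiction
  classical
  have hsub : ↑(Finset.image (fun k : ℕ => g ^ k) (Finset.range (N + 1))) ⊆ S := by
    intro h hh
    simp only [Finset.coe_image, Set.mem_image, Finset.mem_coe, Finset.mem_range] at hh
    obtain ⟨k, hk, rfl⟩ := hh
    exact hmem k (by omega)
  have hcard : (Finset.image (fun k : ℕ => g ^ k) (Finset.range (N + 1))).card = N + 1 := by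
    rw [Finset.card_image_of_injective _ hinj, Finset.card_range]
  have hfinal : N + 1 ≤ N := by
    calc N + 1 = (↑(Finset.image (fun k : ℕ => g ^ k) (Finset.range (N + 1))) : Set G).ncard := by
          rw [Set.ncard_coe_finset, hcard]
      _ ≤ S.ncard := Set.ncard_le_ncard hsub hSfin
      _ ≤ N := hScard
  omega
end

section
/- Let G act by isometries on a metric space X with barycentres, let ε ≥ 0, let g ∈ G, and let M_ε(g) = {x ∈ X : d(x,gx) ≤ τ_X(g) + ε}. Then M_ε(g) is closed under the barycentre maps (if x₁,…,x_n ∈ M_ε(g) then b_n(x₁,…,x_n) ∈ M_ε(g)) and is invariant under every element of the centralizer of g in G. -/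
open Filter Topology

/-- The coarse minset `M_ε(g) = {x : dist x (g x) ≤ τ_X(g) + ε}` is closed under
barycentre maps and invariant under the centralizer of `g`. -/
theorem minset_barycenter_closed_and_centralizer_invariant
    {G X : Type*} [Group G] [MetricSpace X] [MulAction G X]
    (B : Barycenters X)
    (hiso : ∀ (g : G) (x y : X), dist (g • x) (g • y) = dist x y)
    (ε : ℝ) (hε : 0 ≤ ε) (g : G) (τ : ℝ)
    (hτ : ∀ x : X, Tendsto (fun n : ℕ => dist x (g ^ n • x) / n) atTop (𝓝 τ)) :
    (∀ (n : ℕ), 0 < n → ∀ xs : Fin n → X, (∀ i, dist (xs i) (g • xs i) ≤ τ + ε) →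
      dist (B.b n xs) (g • B.b n xs) ≤ τ + ε) ∧
    (∀ h : G, h * g = g * h → ∀ x : X, dist x (g • x) ≤ τ + ε →
      dist (h • x) (g • (h • x)) ≤ τ + ε) := by
  constructor
  · intro n hn xs hxs
    let e : X ≃ᵢ X :=
      { toFun := fun x => g • x
        invFun := fun x => g⁻¹ • x
        left_inv := fun x => by simp
        right_inv := fun x => by simp
        isometry_toFun := Isometry.of_dist_eq fun x y => hiso g x y }
    have key : g • B.b n xs = B.b n (fun i => g • xs i) := B.isom_inv n e xs
    rw [key]
    calc dist (B.b n xs) (B.b n fun i => g • xs i)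
        ≤ (1 / n) * ∑ i, dist (xs i) (g • xs i) := B.lip n hn _ _
      _ ≤ (1 / n) * ∑ _i : Fin n, (τ + ε) := by
          apply mul_le_mul_of_nonneg_left
          · exact Finset.sum_le_sum fun i _ => hxs i
          · positivity
      _ = τ + ε := by
          rw [Finset.sum_const, Finset.card_univ, Fintype.card_fin]
          field_simp
          ring
  · intro h hh x hx
    have : g • h • x = h • g • x := by
      rw [smul_smul, smul_smul, ← hh]
    rw [this, hiso h]
    exact hx
end

section
/- If a metric space X has barycentres, then any two points x, y ∈ X are joined by an isometric embedding of the dyadic rationals in the interval [0, d(x,y)] into X, sending 0 to x and d(x,y) to y. -/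
open Filter Topology

namespace BarycentersAux

variable {X : Type*} [MetricSpace X]

noncomputable def mid (B : Barycenters X) (a b : X) : X := B.b 2 ![a, b]

lemma b_const (B : Barycenters X) (a : X) : B.b 2 ![a, a] = a := by
  have : (![a, a] : Fin 2 → X) = fun _ => a := by
    funext i; fin_cases i <;> rfl
  rw [this, B.idem 2 (by norm_num) a]

lemma dist_mid_left (B : Barycenters X) (a b : X) :
    dist a (mid B a b) ≤ dist a b / 2 := by
  have h := B.lip 2 (by norm_num) ![a, a] ![a, b]
  rw [b_const] at h
  have hs : ∑ i : Fin 2, dist (![a, a] i) (![a, b] i) = dist a b := by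
    simp [Fin.sum_univ_two]
  rw [hs] at h
  have : (1 / ((2:ℕ):ℝ)) * dist a b = dist a b / 2 := by push_cast; ring
  rw [this] at h
  exact h

lemma dist_mid_right (B : Barycenters X) (a b : X) :
    dist (mid B a b) b ≤ dist a b / 2 := by
  have h := B.lip 2 (by norm_num) ![a, b] ![b, b]
  rw [b_const] at h
  have hs : ∑ i : Fin 2, dist (![a, b] i) (![b, b] i) = dist a b := by
    simp [Fin.sum_univ_two, dist_comm]
  rw [hs] at h
  have : (1 / ((2:ℕ):ℝ)) * dist a b = dist a b / 2 := by push_cast; ring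
  rw [this] at h
  exact h

noncomputable def g (B : Barycenters X) (x y : X) : ℕ → ℕ → X
  | 0 => fun i => if i = 0 then x else y
  | (k+1) => fun i =>
      if i % 2 = 0 then g B x y k (i / 2)
      else mid B (g B x y k (i / 2)) (g B x y k (i / 2 + 1))

variable (B : Barycenters X) (x y : X)

lemma g_double (k m : ℕ) : g B x y (k+1) (2*m) = g B x y k m := by
  simp [g, Nat.mul_div_cancel_left, Nat.mul_mod_right]

lemma g_pow (k m : ℕ) : ∀ j, g B x y (k+j) (2^j * m) = g B x y k m := by
  intro j
  induction j with
  | zero => simp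
  | succ j ih =>
      have h1 : 2 ^ (j+1) * m = 2 * (2 ^ j * m) := by ring
      have h2 : k + (j+1) = (k + j) + 1 := rfl
      rw [h1, h2, g_double, ih]

lemma g_zero (k : ℕ) : g B x y k 0 = x := by
  have := g_pow B x y 0 0 k
  simpa [g] using this

lemma g_top (k : ℕ) : g B x y k (2^k) = y := by
  have := g_pow B x y 0 1 k
  simpa [g] using this

lemma g_consec (k : ℕ) : ∀ i : ℕ, i + 1 ≤ 2^k →
    dist (g B x y k i) (g B x y k (i+1)) ≤ dist x y / 2^k := by
  induction k with
  | zero =>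
      intro i hi
      have : i = 0 := by omega
      subst this
      simp [g]
  | succ k ih =>
      intro i hi
      rcases Nat.even_or_odd i with ⟨j, hj⟩ | ⟨j, hj⟩
      · subst hj
        have hji : j + j = 2 * j := by ring
        have e1 : g B x y (k+1) (j + j) = g B x y k j := by
          rw [hji]; exact g_double B x y k j
        have e2 : g B x y (k+1) (j + j + 1) =
            mid B (g B x y k j) (g B x y k (j+1)) := by
          have : (2 * j + 1) % 2 = 1 := by omega
          simp [hji, g, this, Nat.mul_add_div]
        rw [e1, e2]
        have hb : j + 1 ≤ 2 ^ k := by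
          have : 2 ^ (k+1) = 2 * 2 ^ k := by ring
          omega
        have := dist_mid_left B (g B x y k j) (g B x y k (j+1))
        calc dist (g B x y k j) (mid B (g B x y k j) (g B x y k (j+1)))
            ≤ dist (g B x y k j) (g B x y k (j+1)) / 2 := this
          _ ≤ (dist x y / 2^k) / 2 := by linarith [ih j hb]
          _ = dist x y / 2^(k+1) := by ring
      · subst hj
        have h1 : (2 * j + 1) % 2 = 1 := by omega
        have e1 : g B x y (k+1) (2*j+1) =
            mid B (g B x y k j) (g B x y k (j+1)) := by
          simp [g, h1, Nat.mul_add_div]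
        have e2 : g B x y (k+1) (2*j+1+1) = g B x y k (j+1) := by
          have : 2*j+1+1 = 2*(j+1) := by ring
          rw [this]; exact g_double B x y k (j+1)
        rw [e1, e2]
        have hb : j + 1 ≤ 2 ^ k := by
          have : 2 ^ (k+1) = 2 * 2 ^ k := by ring
          omega
        have := dist_mid_right B (g B x y k j) (g B x y k (j+1))
        calc dist (mid B (g B x y k j) (g B x y k (j+1))) (g B x y k (j+1))
            ≤ dist (g B x y k j) (g B x y k (j+1)) / 2 := this
          _ ≤ (dist x y / 2^k) / 2 := by linarith [ih j hb]
          _ = dist x y / 2^(k+1) := by ring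

lemma g_chain (k : ℕ) : ∀ n i : ℕ, i + n ≤ 2^k →
    dist (g B x y k i) (g B x y k (i+n)) ≤ n * (dist x y / 2^k) := by
  intro n
  induction n with
  | zero => intro i _; simp
  | succ n ih =>
      intro i h
      have h1 : i + n ≤ 2 ^ k := by omega
      have h2 : (i + n) + 1 ≤ 2 ^ k := by omega
      calc dist (g B x y k i) (g B x y k (i+(n+1)))
          ≤ dist (g B x y k i) (g B x y k (i+n)) +
            dist (g B x y k (i+n)) (g B x y k (i+n+1)) := by
              have : i + (n+1) = i + n + 1 := by ring
              rw [this]; exact dist_triangle _ _ _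
        _ ≤ n * (dist x y / 2^k) + dist x y / 2^k := by
              linarith [ih i h1, g_consec B x y k (i+n) h2]
        _ = (n+1 : ℕ) * (dist x y / 2^k) := by push_cast; ring

lemma g_exact (k n i : ℕ) (h : i + n ≤ 2^k) :
    dist (g B x y k i) (g B x y k (i+n)) = n * (dist x y / 2^k) := by
  refine le_antisymm (g_chain B x y k n i h) ?_
  have h1 : 0 + i ≤ 2 ^ k := by omega
  have hA := g_chain B x y k i 0 h1
  rw [zero_add] at hA
  have h2 : (i + n) + (2^k - (i+n)) = 2^k := by omega
  have hB := g_chain B x y k (2^k - (i+n)) (i+n) (le_of_eq h2)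
  rw [h2] at hB
  have htot : dist (g B x y k 0) (g B x y k (2^k)) = dist x y := by
    rw [g_zero, g_top]
  have htri := dist_triangle4 (g B x y k 0) (g B x y k i)
    (g B x y k (i+n)) (g B x y k (2^k))
  rw [htot] at htri
  have hcast : ((2^k - (i+n) : ℕ) : ℝ) = (2^k : ℝ) - i - n := by
    push_cast [Nat.cast_sub (by omega : i + n ≤ 2^k)]
    ring
  rw [hcast] at hB
  have hq : (2^k : ℝ) * (dist x y / 2^k) = dist x y := by
    field_simp
  linarith

lemma g_dist (k₁ m₁ k₂ m₂ : ℕ) (h₁ : m₁ ≤ 2^k₁) (h₂ : m₂ ≤ 2^k₂) :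
    dist (g B x y k₁ m₁) (g B x y k₂ m₂) =
      |(m₁ : ℝ) * dist x y / 2^k₁ - (m₂ : ℝ) * dist x y / 2^k₂| := by
  set K := k₁ + k₂ with hK
  have e1 : g B x y k₁ m₁ = g B x y K (2^k₂ * m₁) := (g_pow B x y k₁ m₁ k₂).symm
  have e2 : g B x y k₂ m₂ = g B x y K (2^k₁ * m₂) := by
    rw [hK, add_comm k₁ k₂]; exact (g_pow B x y k₂ m₂ k₁).symm
  set a := 2^k₂ * m₁ with ha
  set b := 2^k₁ * m₂ with hb
  have hKval : (2:ℕ)^K = 2^k₁ * 2^k₂ := by rw [hK, pow_add]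
  have haK : a ≤ 2^K := by
    rw [hKval, ha]; calc 2^k₂ * m₁ ≤ 2^k₂ * 2^k₁ := by exact Nat.mul_le_mul_left _ h₁
      _ = 2^k₁ * 2^k₂ := by ring
  have hbK : b ≤ 2^K := by
    rw [hKval, hb]; exact Nat.mul_le_mul_left _ h₂
  have key : ∀ a b : ℕ, a ≤ b → b ≤ 2^K →
      dist (g B x y K a) (g B x y K b) = ((b : ℝ) - a) * (dist x y / 2^K) := by
    intro a b hab hbK
    have h : a + (b - a) ≤ 2^K := by omega
    have := g_exact B x y K (b - a) a h
    have hre : a + (b - a) = b := by omega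
    rw [hre] at this
    rw [this, Nat.cast_sub hab]
  have habs : dist (g B x y K a) (g B x y K b) =
      |(a : ℝ) - b| * (dist x y / 2^K) := by
    rcases le_total a b with hab | hab
    · rw [key a b hab hbK, abs_sub_comm, abs_of_nonneg (by
        have : (a:ℝ) ≤ b := by exact_mod_cast hab
        linarith)]
    · rw [dist_comm, key b a hab haK, abs_of_nonneg (by
        have : (b:ℝ) ≤ a := by exact_mod_cast hab
        linarith)]
  rw [e1, e2, habs]
  have h2K : ((2:ℝ)^K) = 2^k₁ * 2^k₂ := by rw [hK, pow_add]
  have haR : ((a : ℕ) : ℝ) = 2^k₂ * m₁ := by rw [ha]; push_cast; ring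
  have hbR : ((b : ℕ) : ℝ) = 2^k₁ * m₂ := by rw [hb]; push_cast; ring
  rw [haR, hbR, h2K]
  rw [show (m₁:ℝ) * dist x y / 2^k₁ - (m₂:ℝ) * dist x y / 2^k₂ =
      ((2:ℝ)^k₂ * m₁ - 2^k₁ * m₂) * (dist x y / (2^k₁ * 2^k₂)) from by
    field_simp]
  rw [abs_mul, abs_of_nonneg (div_nonneg dist_nonneg (by positivity))]

end BarycentersAux

/-- In a space with barycentres, any two points `x, y` are joined by an isometric
embedding of the dyadic points of the interval `[0, dist x y]`, sending `0` to `x`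
and `dist x y` to `y`. -/
theorem barycenters_dyadic_geodesic
    {X : Type*} [MetricSpace X] (B : Barycenters X) (x y : X) :
    ∃ f : ℝ → X, f 0 = x ∧ f (dist x y) = y ∧
      ∀ s t : ℝ,
        (∃ m k : ℕ, (m : ℝ) ≤ 2 ^ k ∧ s = m * dist x y / 2 ^ k) →
        (∃ m k : ℕ, (m : ℝ) ≤ 2 ^ k ∧ t = m * dist x y / 2 ^ k) →
        dist (f s) (f t) = |s - t| := by
  classical
  set d := dist x y with hd
  set P : ℝ → Prop := fun s => ∃ m k : ℕ, (m : ℝ) ≤ 2 ^ k ∧ s = m * d / 2 ^ k with hP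
  let f : ℝ → X := fun s =>
    if h : P s then BarycentersAux.g B x y h.choose_spec.choose h.choose else x
  have hcast : ∀ m k : ℕ, (m : ℝ) ≤ 2 ^ k → m ≤ 2 ^ k := by
    intro m k h
    exact_mod_cast h
  have hfeq : ∀ (s : ℝ) (m k : ℕ), m ≤ 2 ^ k → s = m * d / 2 ^ k →
      f s = BarycentersAux.g B x y k m := by
    intro s m k hm hs
    have hPs : P s := ⟨m, k, by exact_mod_cast hm, hs⟩
    have hfs : f s = BarycentersAux.g B x y hPs.choose_spec.choose hPs.choose := by
      simp only [f, dif_pos hPs]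
    obtain ⟨hm', hs'⟩ := hPs.choose_spec.choose_spec
    have hdist := BarycentersAux.g_dist B x y hPs.choose_spec.choose hPs.choose k m
      (hcast _ _ hm') hm
    rw [← hs', ← hs, sub_self, abs_zero] at hdist
    rw [hfs, dist_eq_zero.mp hdist]
  refine ⟨f, ?_, ?_, ?_⟩
  · rw [hfeq 0 0 0 (by norm_num) (by norm_num), BarycentersAux.g_zero]
  · rw [hfeq d 1 0 (by norm_num) (by norm_num)]
    simpa using BarycentersAux.g_top B x y 0
  · rintro s t ⟨m₁, k₁, h1, e1⟩ ⟨m₂, k₂, h2, e2⟩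
    rw [hfeq s m₁ k₁ (hcast _ _ h1) e1, hfeq t m₂ k₂ (hcast _ _ h2) e2,
      BarycentersAux.g_dist B x y k₁ m₁ k₂ m₂ (hcast _ _ h1) (hcast _ _ h2),
      ← e1, ← e2]
end

section
/- Let G act by isometries on a metric space X with barycentres, let g ∈ G with τ = τ_X(g) > 0, and let ε > 0. Then there is a ⟨g⟩-invariant subset A_g ⊂ X and an ε-coarsely surjective map f: ℝ → A_g satisfying |t₁−t₂| − ε ≤ d(f(t₁), f(t₂)) ≤ (1+ε)|t₁−t₂| + ε for all t₁, t₂ ∈ ℝ; that is, g has an ε-quasiaxis. -/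
open Filter Topology

namespace QA

variable {X : Type*} [MetricSpace X]

lemma mid_left (B : Barycenters X) (a b : X) : dist a (B.b 2 ![a, b]) ≤ dist a b / 2 := by
  have h1 : B.b 2 ![a, a] = a := by
    have he : (![a, a] : Fin 2 → X) = fun _ => a := by funext i; fin_cases i <;> rfl
    rw [he]; exact B.idem 2 (by norm_num) a
  have h2 := B.lip 2 (by norm_num) ![a, a] ![a, b]
  rw [h1] at h2
  simp [Fin.sum_univ_two] at h2
  linarith

lemma mid_right (B : Barycenters X) (a b : X) : dist (B.b 2 ![a, b]) b ≤ dist a b / 2 := by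
  have h1 : B.b 2 ![b, b] = b := by
    have he : (![b, b] : Fin 2 → X) = fun _ => b := by funext i; fin_cases i <;> rfl
    rw [he]; exact B.idem 2 (by norm_num) b
  have h2 := B.lip 2 (by norm_num) ![a, b] ![b, b]
  rw [h1] at h2
  simp [Fin.sum_univ_two] at h2
  linarith

def dy (B : Barycenters X) : ℕ → X → X → ℕ → X
  | 0, a, _, 0 => a
  | 0, _, b, _+1 => b
  | (k+1), a, b, i =>
    if i ≤ 2^k then dy B k a (B.b 2 ![a, b]) i
    else dy B k (B.b 2 ![a, b]) b (i - 2^k)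

lemma dy_zero (B : Barycenters X) : ∀ (k : ℕ) (a b : X), dy B k a b 0 = a := by
  intro k
  induction k with
  | zero => intro a b; rfl
  | succ k ih => intro a b; simp only [dy, Nat.zero_le, if_pos]; exact ih _ _

lemma dy_top (B : Barycenters X) : ∀ (k : ℕ) (a b : X), dy B k a b (2^k) = b := by
  intro k
  induction k with
  | zero => intro a b; rfl
  | succ k ih =>
    intro a b
    have h : ¬ (2^(k+1) ≤ 2^k) := by
      simp [Nat.pow_lt_pow_succ]
    have h2 : 2^(k+1) - 2^k = 2^k := by
      have : 2^(k+1) = 2^k + 2^k := by ring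
      omega
    simp only [dy, if_neg h, h2]
    exact ih _ _

lemma dy_dist (B : Barycenters X) : ∀ (k : ℕ) (a b : X) (i j : ℕ), i ≤ j → j ≤ 2^k →
    dist (dy B k a b i) (dy B k a b j) ≤ ((j : ℝ) - i) * dist a b / 2^k := by
  intro k
  induction k with
  | zero =>
    intro a b i j hij hj
    interval_cases j <;> interval_cases i <;> simp [dy] <;> linarith [dist_nonneg (x := a) (y := b)]
  | succ k ih =>
    intro a b i j hij hj
    set m := B.b 2 ![a, b] with hm
    have hN : (0:ℝ) < 2^k := by positivity
    have hij' : (i:ℝ) ≤ j := by exact_mod_cast hij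
    have hpow : (2:ℝ)^(k+1) = 2^k * 2 := by ring
    have hdd : (0:ℝ) ≤ dist a b := dist_nonneg
    by_cases hj2 : j ≤ 2^k
    · have hi2 : i ≤ 2^k := le_trans hij hj2
      simp only [dy, if_pos hi2, if_pos hj2]
      calc dist (dy B k a m i) (dy B k a m j) ≤ ((j:ℝ) - i) * dist a m / 2^k :=
            ih a m i j hij hj2
        _ ≤ ((j:ℝ) - i) * (dist a b / 2) / 2^k := by
            apply (div_le_div_iff_of_pos_right hN).2
            exact mul_le_mul_of_nonneg_left (mid_left B a b) (by linarith)
        _ = ((j:ℝ) - i) * dist a b / 2^(k+1) := by rw [hpow]; ring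
    · have hj3 : 2^k ≤ j := le_of_not_ge hj2
      have hj4 : j - 2^k ≤ 2^k := by
        have : 2^(k+1) = 2^k + 2^k := by ring
        omega
      have hj3' : ((2:ℝ))^k ≤ (j:ℝ) := by exact_mod_cast hj3
      have hcj : ((j - 2^k : ℕ) : ℝ) = (j:ℝ) - 2^k := by push_cast [Nat.cast_sub hj3]; ring
      by_cases hi2 : i ≤ 2^k
      · -- crossing
        have hi2' : (i:ℝ) ≤ (2:ℝ)^k := by exact_mod_cast hi2
        simp only [dy, if_pos hi2, if_neg hj2]
        have t1 : dist (dy B k a m i) m ≤ ((2^k : ℝ) - i) * (dist a b / 2) / 2^k := by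
          have h := ih a m i (2^k) hi2 le_rfl
          rw [dy_top] at h
          have h2 : (((2^k : ℕ) : ℝ) - i) * dist a m / 2^k ≤ ((2^k:ℝ) - i) * (dist a b / 2) / 2^k := by
            push_cast
            apply (div_le_div_iff_of_pos_right hN).2
            exact mul_le_mul_of_nonneg_left (mid_left B a b) (by linarith)
          exact le_trans h h2
        have t2 : dist m (dy B k m b (j - 2^k)) ≤ ((j:ℝ) - 2^k) * (dist a b / 2) / 2^k := by
          have h := ih m b 0 (j - 2^k) (Nat.zero_le _) hj4
          rw [dy_zero] at h
          simp only [Nat.cast_zero, sub_zero, hcj] at h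
          have h2 : ((j:ℝ) - 2^k) * dist m b / 2^k ≤ ((j:ℝ) - 2^k) * (dist a b / 2) / 2^k := by
            apply (div_le_div_iff_of_pos_right hN).2
            exact mul_le_mul_of_nonneg_left (mid_right B a b) (by linarith)
          exact le_trans h h2
        calc dist (dy B k a m i) (dy B k m b (j - 2^k))
            ≤ dist (dy B k a m i) m + dist m (dy B k m b (j - 2^k)) := dist_triangle _ _ _
          _ ≤ ((2^k : ℝ) - i) * (dist a b / 2) / 2^k + ((j:ℝ) - 2^k) * (dist a b / 2) / 2^k := by
              linarith
          _ = ((j:ℝ) - i) * dist a b / 2^(k+1) := by rw [hpow]; ring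
      · have hi3 : 2^k ≤ i := le_of_not_ge hi2
        have hi3' : ((2:ℝ))^k ≤ (i:ℝ) := by exact_mod_cast hi3
        simp only [dy, if_neg hi2, if_neg hj2]
        have hci : ((i - 2^k : ℕ) : ℝ) = (i:ℝ) - 2^k := by push_cast [Nat.cast_sub hi3]; ring
        have h := ih m b (i - 2^k) (j - 2^k) (by omega) hj4
        rw [hci, hcj] at h
        have h2 : ((j:ℝ) - 2^k - ((i:ℝ) - 2^k)) * dist m b / 2^k ≤ ((j:ℝ) - i) * (dist a b / 2) / 2^k := by
          have he : ((j:ℝ) - 2^k - ((i:ℝ) - 2^k)) = (j:ℝ) - i := by ring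
          rw [he]
          apply (div_le_div_iff_of_pos_right hN).2
          exact mul_le_mul_of_nonneg_left (mid_right B a b) (by linarith)
        calc dist (dy B k m b (i - 2^k)) (dy B k m b (j - 2^k))
            ≤ ((j:ℝ) - 2^k - ((i:ℝ) - 2^k)) * dist m b / 2^k := h
          _ ≤ ((j:ℝ) - i) * (dist a b / 2) / 2^k := h2
          _ = ((j:ℝ) - i) * dist a b / 2^(k+1) := by rw [hpow]; ring


variable {G : Type*} [Group G] [MulAction G X]

open Filter Topology in
lemma tau_le (hiso : ∀ (g : G) (x y : X), dist (g • x) (g • y) = dist x y)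
    (g : G) (τ : ℝ)
    (hτ : ∀ x : X, Tendsto (fun n : ℕ => dist x (g ^ n • x) / n) atTop (𝓝 τ))
    (x : X) (k : ℕ) (hk : 0 < k) : τ * k ≤ dist x (g ^ k • x) := by
  have key : ∀ m : ℕ, dist x (g ^ (m * k) • x) ≤ m * dist x (g ^ k • x) := by
    intro m
    induction m with
    | zero => simp
    | succ m ihm =>
      have he : g ^ ((m+1) * k) • x = g ^ (m*k) • (g ^ k • x) := by
        rw [← mul_smul, ← pow_add]
        congr 1
        ring
      calc dist x (g ^ ((m+1) * k) • x)
          ≤ dist x (g ^ (m*k) • x) + dist (g ^ (m*k) • x) (g ^ ((m+1)*k) • x) :=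
            dist_triangle _ _ _
        _ = dist x (g ^ (m*k) • x) + dist x (g ^ k • x) := by
            rw [he, hiso (g ^ (m*k)) x (g ^ k • x)]
        _ ≤ m * dist x (g ^ k • x) + dist x (g ^ k • x) := by linarith
        _ = (m+1 : ℕ) * dist x (g ^ k • x) := by push_cast; ring
  have hmono : Tendsto (fun m : ℕ => m * k) atTop atTop :=
    tendsto_atTop_mono (fun m => Nat.le_mul_of_pos_right m hk) tendsto_id
  have lim : Tendsto (fun m : ℕ => dist x (g ^ (m * k) • x) / (m * k : ℕ)) atTop (𝓝 τ) :=
    (hτ x).comp hmono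
  have hle : τ ≤ dist x (g ^ k • x) / k := by
    refine le_of_tendsto lim ?_
    filter_upwards [eventually_ge_atTop 1] with m hm
    have hm' : (0:ℝ) < m := by exact_mod_cast hm
    have hk' : (0:ℝ) < k := by exact_mod_cast hk
    have hcast : ((m * k : ℕ) : ℝ) = (m:ℝ) * k := by push_cast; ring
    rw [hcast]
    calc dist x (g ^ (m * k) • x) / ((m:ℝ) * k) ≤ ((m:ℝ) * dist x (g ^ k • x)) / ((m:ℝ) * k) := by
          apply div_le_div_of_nonneg_right ?_ (by positivity)
          exact key m
      _ = dist x (g ^ k • x) / k := by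
          rw [mul_div_mul_left _ _ (ne_of_gt hm')]
  have hk' : (0:ℝ) < k := by exact_mod_cast hk
  calc τ * k ≤ (dist x (g ^ k • x) / k) * k := by
        exact mul_le_mul_of_nonneg_right hle (le_of_lt hk')
    _ = dist x (g ^ k • x) := by field_simp

/-- Isometry equivalence from the action of a group element. -/
def isomOf (hiso : ∀ (g : G) (x y : X), dist (g • x) (g • y) = dist x y) (q : G) : X ≃ᵢ X where
  toEquiv := MulAction.toPerm q
  isometry_toFun := Isometry.of_dist_eq (hiso q)

lemma exists_small (B : Barycenters X)
    (hiso : ∀ (g : G) (x y : X), dist (g • x) (g • y) = dist x y)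
    (g : G) (y₀ : X) (n : ℕ) (hn : 0 < n) :
    ∃ x : X, dist x (g • x) ≤ dist y₀ (g ^ n • y₀) / n := by
  obtain ⟨n', rfl⟩ : ∃ n', n = n' + 1 := ⟨n - 1, by omega⟩
  set v : Fin (n'+1) → X := fun i => g ^ (i : ℕ) • y₀ with hv
  refine ⟨B.b (n'+1) v, ?_⟩
  have hg : g • B.b (n'+1) v = B.b (n'+1) (fun i => g • v i) :=
    B.isom_inv (n'+1) (isomOf hiso g) v
  have hσ : B.b (n'+1) (v ∘ (finRotate (n'+1))) = B.b (n'+1) v :=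
    B.symm (n'+1) (finRotate (n'+1)) v
  have hlip := B.lip (n'+1) (Nat.succ_pos _) (v ∘ (finRotate (n'+1))) (fun i => g • v i)
  rw [hσ] at hlip
  have hsum : ∑ i : Fin (n'+1), dist ((v ∘ finRotate (n'+1)) i) (g • v i)
      = dist y₀ (g ^ (n'+1) • y₀) := by
    rw [Finset.sum_eq_single_of_mem (Fin.last n') (Finset.mem_univ _)]
    · simp only [Function.comp_apply, finRotate_succ_apply, Fin.last_add_one]
      have h0 : v 0 = y₀ := by simp [hv]
      have hl : g • v (Fin.last n') = g ^ (n'+1) • y₀ := by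
        simp only [hv, Fin.val_last]
        rw [← mul_smul, ← pow_succ']
      rw [h0, hl]
    · intro i _ hi
      simp only [Function.comp_apply, finRotate_succ_apply]
      have hlt : (i:ℕ) < n' := by
        have := Fin.val_lt_last hi
        omega
      have h1 : ((i + 1 : Fin (n'+1)) : ℕ) = (i:ℕ) + 1 := by
        rw [Fin.val_add_one_of_lt]
        exact Fin.lt_last_iff_ne_last.2 hi
      have h2 : v (i+1) = g • v i := by
        simp only [hv, h1]
        rw [← mul_smul, ← pow_succ']
      rw [h2, dist_self]
  rw [hsum] at hlip
  rw [hg]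
  calc dist (B.b (n'+1) v) (B.b (n'+1) fun i => g • v i)
      ≤ (1 / (n'+1 : ℕ)) * dist y₀ (g ^ (n'+1) • y₀) := hlip
    _ = dist y₀ (g ^ (n'+1) • y₀) / (n'+1 : ℕ) := by ring


set_option maxHeartbeats 1000000 in
open Filter Topology in
lemma main (B : Barycenters X)
    (hiso : ∀ (g : G) (x y : X), dist (g • x) (g • y) = dist x y)
    (g : G) (τ : ℝ) (hτpos : 0 < τ)
    (hτ : ∀ x : X, Tendsto (fun n : ℕ => dist x (g ^ n • x) / n) atTop (𝓝 τ))
    (ε : ℝ) (hε : 0 < ε) (hε1 : ε ≤ 1) :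
    ∃ A : Set X, (∀ (n : ℤ) (a : X), a ∈ A → g ^ n • a ∈ A) ∧
      ∃ f : ℝ → X, (∀ t, f t ∈ A) ∧ (∀ a ∈ A, ∃ t : ℝ, dist a (f t) ≤ ε) ∧
        ∀ t₁ t₂ : ℝ, |t₁ - t₂| - ε ≤ dist (f t₁) (f t₂) ∧
          dist (f t₁) (f t₂) ≤ (1 + ε) * |t₁ - t₂| + ε := by
  classical
  set y₀ : X := B.b 0 (fun i => i.elim0) with hy₀
  set δ : ℝ := min (ε/8) (ε*τ) with hδdef
  have hδpos : 0 < δ := lt_min (by linarith) (by positivity)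
  have hδ1 : δ ≤ ε/8 := min_le_left _ _
  have hδ2 : δ ≤ ε*τ := min_le_right _ _
  -- find a point with displacement ≤ τ + δ
  have hev : ∀ᶠ n : ℕ in atTop, dist y₀ (g ^ n • y₀) / n < τ + δ :=
    (hτ y₀).eventually_lt_const (by linarith)
  obtain ⟨n, hn2, hn1⟩ := (hev.and (eventually_ge_atTop 1)).exists
  obtain ⟨x, hx⟩ := exists_small B hiso g y₀ n hn1
  set c : ℝ := dist x (g • x) with hcdef
  have hc2 : c ≤ τ + δ := le_of_lt (lt_of_le_of_lt hx hn2)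
  have hc1 : τ ≤ c := by
    have h := tau_le hiso g τ hτ x 1 one_pos
    simpa using h
  -- choose the dyadic depth
  obtain ⟨k, hk⟩ : ∃ k : ℕ, 4*τ/ε < 2^k := pow_unbounded_of_one_lt _ (by norm_num)
  set N : ℕ := 2^k with hNdef
  have hNRpos : 0 < (N:ℝ) := by positivity
  have hNR2 : (N:ℝ) = (2:ℝ)^k := by rw [hNdef]; push_cast; ring
  have hτN : τ / (N:ℝ) < ε/4 := by
    rw [hNR2]
    rw [div_lt_iff₀ (by positivity)]
    rw [div_lt_iff₀ hε] at hk
    nlinarith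
  have hNZpos : (0:ℤ) < (N:ℤ) := by positivity
  have hNZ0 : (N:ℤ) ≠ 0 := ne_of_gt hNZpos
  -- the dyadic chain
  set p : ℕ → X := dy B k x (g • x) with hpdef
  have hp0 : p 0 = x := dy_zero B k x (g • x)
  have hpN : p N = g • x := dy_top B k x (g • x)
  have p_dist : ∀ i j : ℕ, i ≤ j → j ≤ N → dist (p i) (p j) ≤ ((j:ℝ) - i) * c / (N:ℝ) := by
    intro i j hij hj
    have := dy_dist B k x (g • x) i j hij hj
    rw [hNR2]
    exact this
  set ch : ℤ → X := fun m => g ^ (m / (N:ℤ)) • p (m % (N:ℤ)).toNat with hchdef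
  have ch_eq : ∀ (q : ℤ) (r : ℕ), (r:ℤ) < (N:ℤ) → ch (q * (N:ℤ) + r) = g ^ q • p r := by
    intro q r hr
    have h1 : (q * (N:ℤ) + r) / (N:ℤ) = q := by
      rw [add_comm, Int.add_mul_ediv_right _ _ hNZ0,
        Int.ediv_eq_zero_of_lt (Int.natCast_nonneg r) hr, zero_add]
    have h2 : (q * (N:ℤ) + r) % (N:ℤ) = r := by
      rw [add_comm, Int.add_mul_emod_self_right, Int.emod_eq_of_lt (Int.natCast_nonneg r) hr]
    show g ^ ((q * (N:ℤ) + r) / (N:ℤ)) • p ((q * (N:ℤ) + r) % (N:ℤ)).toNat = _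
    rw [h1, h2, Int.toNat_natCast]
  have ch_eqN : ∀ q : ℤ, ch (q * (N:ℤ) + (N:ℤ)) = g ^ q • p N := by
    intro q
    have he : q * (N:ℤ) + (N:ℤ) = (q+1) * (N:ℤ) + ((0:ℕ):ℤ) := by push_cast; ring
    rw [he, ch_eq (q+1) 0 hNZpos, hp0, hpN, zpow_add_one, mul_smul]
  have ch_dec : ∀ m : ℤ, ∃ (q : ℤ) (r : ℕ), m = q * (N:ℤ) + r ∧ (r:ℤ) < (N:ℤ) ∧ ch m = g ^ q • p r := by
    intro m
    refine ⟨m / (N:ℤ), (m % (N:ℤ)).toNat, ?_, ?_, ?_⟩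
    · have h1 := Int.mul_ediv_add_emod m (N:ℤ)
      have h2 : 0 ≤ m % (N:ℤ) := Int.emod_nonneg m hNZ0
      rw [Int.toNat_of_nonneg h2]
      linarith
    · rw [Int.toNat_of_nonneg (Int.emod_nonneg m hNZ0)]
      exact Int.emod_lt_of_pos m hNZpos
    · rfl
  have ch_adj : ∀ m : ℤ, dist (ch m) (ch (m+1)) ≤ c / (N:ℝ) := by
    intro m
    obtain ⟨q, r, hm, hr, hchm⟩ := ch_dec m
    have hrN : r < N := by exact_mod_cast hr
    have h2 : ch (m+1) = g ^ q • p (r+1) := by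
      rcases lt_or_eq_of_le (Nat.succ_le_of_lt hrN) with h | h
      · have he : m + 1 = q * (N:ℤ) + ((r+1 : ℕ) : ℤ) := by rw [hm]; push_cast; ring
        rw [he, ch_eq q (r+1) (by exact_mod_cast h)]
      · have he : m + 1 = q * (N:ℤ) + (N:ℤ) := by
          rw [hm]; have : ((r:ℤ)+1) = (N:ℤ) := by exact_mod_cast congrArg (Nat.cast : ℕ → ℤ) h
          linarith
        rw [he, ch_eqN q, ← h]
    rw [hchm, h2, hiso (g ^ q)]
    have := p_dist r (r+1) (Nat.le_succ r) hrN
    calc dist (p r) (p (r+1)) ≤ (((r+1:ℕ):ℝ) - r) * c / (N:ℝ) := this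
      _ = c / (N:ℝ) := by push_cast; ring
  have ch_upper : ∀ (m : ℤ) (j : ℕ), dist (ch m) (ch (m + j)) ≤ j * c / (N:ℝ) := by
    intro m j
    induction j with
    | zero => simp
    | succ j ihj =>
      have he : m + ((j+1 : ℕ):ℤ) = (m + j) + 1 := by push_cast; ring
      calc dist (ch m) (ch (m + ((j+1:ℕ):ℤ)))
          ≤ dist (ch m) (ch (m + j)) + dist (ch (m + j)) (ch (m + ((j+1:ℕ):ℤ))) :=
            dist_triangle _ _ _
        _ ≤ j * c / (N:ℝ) + c / (N:ℝ) := by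
            rw [he]
            exact add_le_add ihj (ch_adj (m + j))
        _ = ((j+1:ℕ):ℝ) * c / (N:ℝ) := by push_cast; ring
  have ch_upper_abs : ∀ m₁ m₂ : ℤ, dist (ch m₁) (ch m₂) ≤ |(m₁:ℝ) - m₂| * c / (N:ℝ) := by
    have key : ∀ m₁ m₂ : ℤ, m₁ ≤ m₂ → dist (ch m₁) (ch m₂) ≤ ((m₂:ℝ) - m₁) * c / (N:ℝ) := by
      intro m₁ m₂ h
      have hj : m₂ = m₁ + ((m₂ - m₁).toNat : ℤ) := by
        rw [Int.toNat_of_nonneg (by omega)]; ring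
      have := ch_upper m₁ (m₂ - m₁).toNat
      rw [← hj] at this
      have hc : (((m₂ - m₁).toNat : ℕ) : ℝ) = (m₂:ℝ) - m₁ := by
        have : (((m₂ - m₁).toNat : ℕ) : ℤ) = m₂ - m₁ := Int.toNat_of_nonneg (by omega)
        exact_mod_cast congrArg (Int.cast : ℤ → ℝ) this
      rw [hc] at this
      exact this
    intro m₁ m₂
    rcases le_total m₁ m₂ with h | h
    · have h' : (m₁:ℝ) ≤ m₂ := by exact_mod_cast h
      rw [abs_of_nonpos (by linarith), neg_sub]
      exact key m₁ m₂ h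
    · have h' : (m₂:ℝ) ≤ m₁ := by exact_mod_cast h
      rw [abs_of_nonneg (by linarith), dist_comm]
      exact key m₂ m₁ h
  -- positions of the pure orbit points
  have ch_orbit : ∀ q : ℤ, ch (q * (N:ℤ)) = g ^ q • x := by
    intro q
    have he : q * (N:ℤ) = q * (N:ℤ) + ((0:ℕ):ℤ) := by push_cast; ring
    rw [he, ch_eq q 0 hNZpos, hp0]
  -- lower bound
  have ch_lower : ∀ m₁ m₂ : ℤ, m₁ ≤ m₂ →
      ((m₂:ℝ) - m₁) * τ / (N:ℝ) - 2*δ ≤ dist (ch m₁) (ch m₂) := by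
    intro m₁ m₂ hm
    set q₁ : ℤ := m₁ / (N:ℤ) with hq₁
    set q₂ : ℤ := m₂ / (N:ℤ) + 1 with hq₂
    have hd₁ := Int.mul_ediv_add_emod m₁ (N:ℤ)
    have hd₂ := Int.mul_ediv_add_emod m₂ (N:ℤ)
    have hr₁0 : 0 ≤ m₁ % (N:ℤ) := Int.emod_nonneg m₁ hNZ0
    have hr₁N : m₁ % (N:ℤ) < (N:ℤ) := Int.emod_lt_of_pos m₁ hNZpos
    have hr₂0 : 0 ≤ m₂ % (N:ℤ) := Int.emod_nonneg m₂ hNZ0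
    have hr₂N : m₂ % (N:ℤ) < (N:ℤ) := Int.emod_lt_of_pos m₂ hNZpos
    set e₁ : ℤ := m₁ - q₁ * (N:ℤ) with he₁
    set e₂ : ℤ := q₂ * (N:ℤ) - m₂ with he₂
    have he₁' : e₁ = m₁ % (N:ℤ) := by rw [Int.emod_def, he₁, hq₁]; ring
    have he₂' : e₂ = (N:ℤ) - m₂ % (N:ℤ) := by rw [Int.emod_def, he₂, hq₂]; ring
    have he₁b : 0 ≤ e₁ ∧ e₁ < (N:ℤ) := by rw [he₁']; exact ⟨hr₁0, hr₁N⟩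
    have he₂b : 0 < e₂ ∧ e₂ ≤ (N:ℤ) := by rw [he₂']; omega
    have hq : q₁ < q₂ := by
      rw [hq₁, hq₂]
      exact lt_of_le_of_lt (Int.ediv_le_ediv hNZpos hm) (lt_add_one _)
    set j : ℕ := (q₂ - q₁).toNat with hj
    have hjz : (j : ℤ) = q₂ - q₁ := Int.toNat_of_nonneg (by linarith)
    have hjpos : 0 < j := by
      have h0 : (0:ℤ) < (j:ℤ) := by rw [hjz]; linarith
      exact_mod_cast h0
    have horbit : dist (ch (q₁ * (N:ℤ))) (ch (q₂ * (N:ℤ))) = dist x (g ^ j • x) := by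
      rw [ch_orbit, ch_orbit]
      have e1 : g ^ (-q₁) • g ^ q₁ • x = x := by
        rw [← mul_smul, ← zpow_add]; simp
      have e2 : g ^ (-q₁) • g ^ q₂ • x = g ^ (j:ℕ) • x := by
        rw [← mul_smul, ← zpow_add, neg_add_eq_sub, ← hjz, zpow_natCast]
      rw [← hiso (g ^ (-q₁)) (g ^ q₁ • x) (g ^ q₂ • x), e1, e2]
    have htau : τ * j ≤ dist x (g ^ j • x) := tau_le hiso g τ hτ x j hjpos
    have htri : dist x (g ^ j • x) ≤
        dist (ch (q₁ * (N:ℤ))) (ch m₁) + dist (ch m₁) (ch m₂) + dist (ch m₂) (ch (q₂ * (N:ℤ))) := by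
      rw [← horbit]
      exact dist_triangle4 _ _ _ _
    have hb₁ : dist (ch (q₁ * (N:ℤ))) (ch m₁) ≤ (e₁:ℝ) * c / (N:ℝ) := by
      have := ch_upper_abs (q₁ * (N:ℤ)) m₁
      have habs : |((q₁ * (N:ℤ) : ℤ):ℝ) - (m₁:ℝ)| = (e₁:ℝ) := by
        rw [abs_of_nonpos]
        · push_cast [he₁]; ring
        · have h0 : (0:ℤ) ≤ m₁ - q₁ * (N:ℤ) := by rw [← he₁]; exact he₁b.1
          have h1 : (q₁ * (N:ℤ) : ℤ) ≤ m₁ := by linarith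
          have h' : ((q₁*(N:ℤ) : ℤ):ℝ) ≤ (m₁:ℝ) := by exact_mod_cast h1
          linarith
      rw [habs] at this
      exact this
    have hb₂ : dist (ch m₂) (ch (q₂ * (N:ℤ))) ≤ (e₂:ℝ) * c / (N:ℝ) := by
      have := ch_upper_abs m₂ (q₂ * (N:ℤ))
      have habs : |(m₂:ℝ) - ((q₂ * (N:ℤ) : ℤ):ℝ)| = (e₂:ℝ) := by
        rw [abs_of_nonpos]
        · push_cast [he₂]; ring
        · have h0 : (0:ℤ) < q₂ * (N:ℤ) - m₂ := by rw [← he₂]; exact he₂b.1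
          have h1 : m₂ ≤ (q₂ * (N:ℤ) : ℤ) := by linarith
          have h' : (m₂:ℝ) ≤ ((q₂*(N:ℤ) : ℤ):ℝ) := by exact_mod_cast h1
          linarith
      rw [habs] at this
      exact this
    -- arithmetic
    set D := dist (ch m₁) (ch m₂) with hD
    set E₁ := (e₁:ℝ) with hE₁
    set E₂ := (e₂:ℝ) with hE₂
    set M := (m₂:ℝ) - (m₁:ℝ) with hM
    have hsum : (j:ℝ) * (N:ℝ) = M + E₁ + E₂ := by
      have hz : (j:ℤ) * (N:ℤ) = (m₂ - m₁) + e₁ + e₂ := by rw [hjz, he₁, he₂]; ring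
      have := congrArg (Int.cast : ℤ → ℝ) hz
      push_cast at this
      rw [hM, hE₁, hE₂]
      push_cast
      linarith
    have hE₁b : 0 ≤ E₁ ∧ E₁ ≤ (N:ℝ) := by
      constructor
      · rw [hE₁]; exact_mod_cast he₁b.1
      · have h1 : (e₁:ℝ) ≤ ((N:ℤ):ℝ) := by exact_mod_cast le_of_lt he₁b.2
        push_cast at h1
        exact h1
    have hE₂b : 0 ≤ E₂ ∧ E₂ ≤ (N:ℝ) := by
      constructor
      · rw [hE₂]; exact_mod_cast le_of_lt he₂b.1
      · have h1 : (e₂:ℝ) ≤ ((N:ℤ):ℝ) := by exact_mod_cast he₂b.2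
        push_cast at h1
        exact h1
    have key : τ * ((M + E₁ + E₂)/(N:ℝ)) ≤ E₁*c/(N:ℝ) + D + E₂*c/(N:ℝ) := by
      have hjr : (j:ℝ) = (M + E₁ + E₂)/(N:ℝ) := by
        field_simp
        linarith [hsum]
      calc τ * ((M + E₁ + E₂)/(N:ℝ)) = τ * (j:ℝ) := by rw [hjr]
        _ ≤ dist x (g ^ j • x) := htau
        _ ≤ E₁*c/(N:ℝ) + D + E₂*c/(N:ℝ) := by
            calc dist x (g ^ j • x) ≤ dist (ch (q₁ * (N:ℤ))) (ch m₁) + D + dist (ch m₂) (ch (q₂ * (N:ℤ))) := htri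
              _ ≤ E₁*c/(N:ℝ) + D + E₂*c/(N:ℝ) := by linarith
    have heq : τ*(M+E₁+E₂)/(N:ℝ) - (E₁+E₂)*c/(N:ℝ) = M*τ/(N:ℝ) - (E₁+E₂)*(c-τ)/(N:ℝ) := by ring
    have hloss : (E₁+E₂)*(c-τ)/(N:ℝ) ≤ 2*δ := by
      rw [div_le_iff₀ hNRpos]
      nlinarith [hE₁b.1, hE₁b.2, hE₂b.1, hE₂b.2, hδpos]
    have key' : τ*(M+E₁+E₂)/(N:ℝ) ≤ (E₁+E₂)*c/(N:ℝ) + D := by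
      have hring : (E₁+E₂)*c/(N:ℝ) + D = E₁*c/(N:ℝ) + D + E₂*c/(N:ℝ) := by ring
      rw [hring, mul_div_assoc]
      exact key
    linarith [key, heq, hloss, key']
  -- invariance
  have ch_smul : ∀ (n' : ℤ) (m : ℤ), g ^ n' • ch m = ch (m + n' * (N:ℤ)) := by
    intro n' m
    obtain ⟨q, r, hm, hr, hchm⟩ := ch_dec m
    have he : m + n' * (N:ℤ) = (q + n') * (N:ℤ) + (r:ℤ) := by rw [hm]; ring
    rw [he, ch_eq (q + n') r hr, hchm, ← mul_smul, ← zpow_add, add_comm n' q]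
  -- the quasi-axis map
  refine ⟨Set.range ch, ?_, fun t => ch (round (t * (N:ℝ) / τ)), fun t => ⟨_, rfl⟩, ?_, ?_⟩
  · rintro n' a ⟨m, rfl⟩
    exact ⟨m + n' * (N:ℤ), (ch_smul n' m).symm⟩
  · rintro a ⟨m, rfl⟩
    refine ⟨(m:ℝ) * τ / (N:ℝ), ?_⟩
    show dist (ch m) (ch (round ((m:ℝ) * τ / (N:ℝ) * (N:ℝ) / τ))) ≤ ε
    have he : (m:ℝ) * τ / (N:ℝ) * (N:ℝ) / τ = (m:ℝ) := by
      field_simp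
    rw [he, round_intCast, dist_self]
    linarith
  · intro t₁ t₂
    set m₁ : ℤ := round (t₁ * (N:ℝ) / τ) with hm₁
    set m₂ : ℤ := round (t₂ * (N:ℝ) / τ) with hm₂
    set u₁ : ℝ := (m₁:ℝ) * τ / (N:ℝ) with hu₁
    set u₂ : ℝ := (m₂:ℝ) * τ / (N:ℝ) with hu₂
    have hubound : ∀ t : ℝ, |((round (t * (N:ℝ) / τ) : ℤ):ℝ) * τ / (N:ℝ) - t| ≤ ε/8 := by
      intro t
      have h1 : |t * (N:ℝ) / τ - ((round (t * (N:ℝ) / τ) : ℤ):ℝ)| ≤ 1/2 := abs_sub_round _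
      have he : ((round (t * (N:ℝ) / τ) : ℤ):ℝ) * τ / (N:ℝ) - t
          = -((t * (N:ℝ) / τ - ((round (t * (N:ℝ) / τ) : ℤ):ℝ)) * (τ / (N:ℝ))) := by
        field_simp
        ring
      rw [he, abs_neg, abs_mul]
      have h2 : |τ / (N:ℝ)| = τ / (N:ℝ) := abs_of_pos (by positivity)
      rw [h2]
      calc |t * (N:ℝ) / τ - ((round (t * (N:ℝ) / τ) : ℤ):ℝ)| * (τ/(N:ℝ)) ≤ (1/2) * (τ/(N:ℝ)) :=
            mul_le_mul_of_nonneg_right h1 (by positivity)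
        _ ≤ ε/8 := by linarith [hτN]
    have hub₁ : |u₁ - t₁| ≤ ε/8 := hubound t₁
    have hub₂ : |u₂ - t₂| ≤ ε/8 := hubound t₂
    have tri : ∀ a b : ℝ, |a - b| ≤ |a| + |b| := fun a b => by
      rw [sub_eq_add_neg]
      exact (abs_add_le _ _).trans (by rw [abs_neg])
    have hud : |u₁ - u₂| = |(m₁:ℝ) - m₂| * τ / (N:ℝ) := by
      have he : u₁ - u₂ = ((m₁:ℝ) - m₂) * (τ/(N:ℝ)) := by rw [hu₁, hu₂]; ring
      rw [he, abs_mul, abs_of_pos (show (0:ℝ) < τ/(N:ℝ) by positivity)]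
      ring
    have habs1 : |t₁ - t₂| ≤ |u₁ - u₂| + ε/4 := by
      have he : t₁ - t₂ = (u₁ - u₂) + ((t₁ - u₁) - (t₂ - u₂)) := by ring
      calc |t₁ - t₂| = |(u₁ - u₂) + ((t₁ - u₁) - (t₂ - u₂))| := by rw [← he]
        _ ≤ |u₁ - u₂| + |(t₁ - u₁) - (t₂ - u₂)| := abs_add_le _ _
        _ ≤ |u₁ - u₂| + (|t₁ - u₁| + |t₂ - u₂|) := by linarith [tri (t₁ - u₁) (t₂ - u₂)]
        _ ≤ |u₁ - u₂| + ε/4 := by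
            rw [abs_sub_comm t₁ u₁, abs_sub_comm t₂ u₂]
            linarith
    have habs2 : |u₁ - u₂| ≤ |t₁ - t₂| + ε/4 := by
      have he : u₁ - u₂ = (t₁ - t₂) + ((u₁ - t₁) - (u₂ - t₂)) := by ring
      calc |u₁ - u₂| = |(t₁ - t₂) + ((u₁ - t₁) - (u₂ - t₂))| := by rw [← he]
        _ ≤ |t₁ - t₂| + |(u₁ - t₁) - (u₂ - t₂)| := abs_add_le _ _
        _ ≤ |t₁ - t₂| + (|u₁ - t₁| + |u₂ - t₂|) := by linarith [tri (u₁ - t₁) (u₂ - t₂)]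
        _ ≤ |t₁ - t₂| + ε/4 := by linarith
    set D := dist (ch m₁) (ch m₂) with hDdef
    have hlow : |u₁ - u₂| - 2*δ ≤ D := by
      rcases le_total m₁ m₂ with h | h
      · have h' : (m₁:ℝ) ≤ m₂ := by exact_mod_cast h
        have := ch_lower m₁ m₂ h
        rw [hud, abs_of_nonpos (by linarith), neg_sub]
        exact this
      · have h' : (m₂:ℝ) ≤ m₁ := by exact_mod_cast h
        have h2 := ch_lower m₂ m₁ h
        rw [hud, abs_of_nonneg (by linarith), hDdef, dist_comm]
        exact h2
    have hhigh : D ≤ |u₁ - u₂| * (1 + ε) := by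
      have h1 : D ≤ |(m₁:ℝ) - m₂| * c / (N:ℝ) := ch_upper_abs m₁ m₂
      have h2 : |(m₁:ℝ) - m₂| * c / (N:ℝ) = (|(m₁:ℝ) - m₂| * τ / (N:ℝ)) * (c/τ) := by
        field_simp
      have h3 : c / τ ≤ 1 + ε := by
        rw [div_le_iff₀ hτpos]
        nlinarith
      have h4 : 0 ≤ |(m₁:ℝ) - m₂| * τ / (N:ℝ) := by positivity
      calc D ≤ (|(m₁:ℝ) - m₂| * τ / (N:ℝ)) * (c/τ) := by rw [← h2]; exact h1
        _ ≤ (|(m₁:ℝ) - m₂| * τ / (N:ℝ)) * (1 + ε) := mul_le_mul_of_nonneg_left h3 h4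
        _ = |u₁ - u₂| * (1 + ε) := by rw [hud]
    constructor
    · -- lower bound
      calc |t₁ - t₂| - ε ≤ (|u₁ - u₂| + ε/4) - ε := by linarith
        _ ≤ |u₁ - u₂| - 2*δ := by linarith
        _ ≤ D := hlow
    · -- upper bound
      have h5 : |u₁ - u₂| * (1 + ε) ≤ (|t₁ - t₂| + ε/4) * (1 + ε) := by
        apply mul_le_mul_of_nonneg_right habs2 (by linarith)
      calc D ≤ |u₁ - u₂| * (1 + ε) := hhigh
        _ ≤ (|t₁ - t₂| + ε/4) * (1 + ε) := h5
        _ ≤ (1 + ε) * |t₁ - t₂| + ε := by nlinarith [abs_nonneg (t₁ - t₂)]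

end QA

/-- In a space with barycentres, every group element with positive stable translation
length admits an `ε`-quasiaxis, for every `ε > 0`. -/
theorem barycenters_quasiaxis
    {G X : Type*} [Group G] [MetricSpace X] [MulAction G X]
    (B : Barycenters X)
    (hiso : ∀ (g : G) (x y : X), dist (g • x) (g • y) = dist x y)
    (g : G) (τ : ℝ) (hτpos : 0 < τ)
    (hτ : ∀ x : X, Tendsto (fun n : ℕ => dist x (g ^ n • x) / n) atTop (𝓝 τ))
    (ε : ℝ) (hε : 0 < ε) :
    ∃ A : Set X, (∀ (n : ℤ) (a : X), a ∈ A → g ^ n • a ∈ A) ∧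
      ∃ f : ℝ → X, (∀ t, f t ∈ A) ∧ (∀ a ∈ A, ∃ t : ℝ, dist a (f t) ≤ ε) ∧
        ∀ t₁ t₂ : ℝ, |t₁ - t₂| - ε ≤ dist (f t₁) (f t₂) ∧
          dist (f t₁) (f t₂) ≤ (1 + ε) * |t₁ - t₂| + ε := by
  obtain ⟨A, hA, f, hf1, hf2, hf3⟩ :=
    QA.main B hiso g τ hτpos hτ (min ε 1) (lt_min hε one_pos) (min_le_right _ _)
  have hmin : min ε 1 ≤ ε := min_le_left _ _
  refine ⟨A, hA, f, hf1, fun a ha => ?_, fun t₁ t₂ => ?_⟩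
  · obtain ⟨t, ht⟩ := hf2 a ha
    exact ⟨t, ht.trans hmin⟩
  · obtain ⟨h1, h2⟩ := hf3 t₁ t₂
    refine ⟨by linarith, ?_⟩
    nlinarith [abs_nonneg (t₁ - t₂)]
end

section
/- Let φ: E → G be a ℤ-central extension of a finitely generated group G, with kernel generated by t. Suppose E acts by isometries on a geodesic space L quasi-isometric to ℝ, with τ_L(t) > 0. Then the diagonal action of E on G × L (with the ℓ¹-product metric, where G carries a word metric) is metrically proper and cobounded. -/
/-!
Since `τ_L(t) > 0`, the displacement of `x₀` by `tᵏ` grows linearly in `|k|`. The fibres of `φ`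
are `⟨t⟩`-cosets, so a set of elements of `E` with bounded word length of `φ e` and bounded
displacement on `L` meets finitely many fibres, each in finitely many points: the action is proper.
For coboundedness, `k ↦ q (tᵏ • x₀)` has bounded steps and grows linearly in `|j - k|`, so it
cannot turn back and is coarsely dense in `ℝ`; through the quasi-isometry `q`, the `⟨t⟩`-orbit of
`x₀` is coarsely dense in `L`, and lifting points of `G` along `φ` covers `G × L`.
-/

open Filter Topology

/-- Word length of `g` with respect to a (symmetrised) generating set `S`. -/
noncomputable def wordLength {G : Type*} [Group G] (S : Set G) (g : G) : ℕ :=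
  sInf {n : ℕ | ∃ l : List G, l.length = n ∧ (∀ s ∈ l, s ∈ S ∨ s⁻¹ ∈ S) ∧ l.prod = g}

section WordLength

variable {G : Type*} [Group G] {S : Set G}

theorem wordLength_one : wordLength S 1 = 0 :=
  Nat.sInf_eq_zero.2 (Or.inl ⟨[], rfl, by simp, rfl⟩)

theorem exists_list_length_eq_wordLength (hgen : Subgroup.closure S = ⊤) (g : G) :
    ∃ l : List G, l.length = wordLength S g ∧ (∀ s ∈ l, s ∈ S ∨ s⁻¹ ∈ S) ∧ l.prod = g := by
  have hg : g ∈ Submonoid.closure (S ∪ S⁻¹) := by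
    rw [← Subgroup.closure_toSubmonoid, hgen]; trivial
  obtain ⟨l, hl, hprod⟩ := Submonoid.exists_list_of_mem_closure hg
  exact Nat.sInf_mem
    (s := {n | ∃ l : List G, l.length = n ∧ (∀ s ∈ l, s ∈ S ∨ s⁻¹ ∈ S) ∧ l.prod = g})
    ⟨_, l, rfl, hl, hprod⟩

theorem finite_setOf_wordLength_le (hS : S.Finite) (hgen : Subgroup.closure S = ⊤) (n : ℕ) :
    {g | wordLength S g ≤ n}.Finite := by
  have : Finite ↑(S ∪ S⁻¹) := (hS.union hS.inv).to_subtype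
  refine (((List.finite_length_le ↑(S ∪ S⁻¹) n).image (List.map (↑))).image List.prod).subset ?_
  intro g hg
  obtain ⟨l, hlen, hl, rfl⟩ := exists_list_length_eq_wordLength hgen g
  lift l to List ↑(S ∪ S⁻¹) using hl
  exact ⟨_, ⟨l, ((l.length_map _).symm.trans hlen).trans_le hg, rfl⟩, rfl⟩

end WordLength

section CoarsePath

variable {a : ℤ → ℝ} {D : ℝ}

theorem exists_mem_Icc_abs_sub_le_of_mem_uIcc (hstep : ∀ k, |a (k + 1) - a k| ≤ D)
    {i j : ℤ} (hij : i ≤ j) {r : ℝ} (hr : r ∈ Set.uIcc (a i) (a j)) :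
    ∃ k ∈ Set.Icc i j, |a k - r| ≤ D := by
  induction j, hij using Int.leInduction with
  | base =>
    rw [Set.uIcc_self, Set.mem_singleton_iff] at hr
    exact ⟨i, Set.left_mem_Icc.2 le_rfl, by simpa [hr] using (abs_nonneg _).trans (hstep i)⟩
  | succ j hij ih =>
    rcases Set.uIcc_subset_uIcc_union_uIcc hr with hr | hr
    · obtain ⟨k, hk, hkr⟩ := ih hr
      exact ⟨k, Set.Icc_subset_Icc_right (by omega) hk, hkr⟩
    · exact ⟨j + 1, ⟨by omega, le_rfl⟩,
        (Set.abs_sub_right_of_mem_uIcc hr).trans (hstep j)⟩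

theorem mem_uIcc_of_linear_lower_bound (hstep : ∀ k, |a (k + 1) - a k| ≤ D) {c C : ℝ}
    (hc : 0 ≤ c) (hlow : ∀ j k : ℤ, c * |(j : ℝ) - k| - C ≤ |a j - a k|) {n : ℕ}
    (hn : D < c * n - C) : a 0 ∈ Set.uIcc (a (-n)) (a n) := by
  have hfar : ∀ j k : ℤ, (n : ℝ) ≤ |(j : ℝ) - k| → D < |a j - a k| := fun j k hjk =>
    hn.trans_le (by nlinarith [hlow j k])
  -- Each endpoint is `D`-far from the opposite half of the path, whose indices are all `n` away.
  have hleft : a (-n) ∉ Set.uIcc (a 0) (a n) := fun h => by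
    obtain ⟨k, hk, hkr⟩ := exists_mem_Icc_abs_sub_le_of_mem_uIcc hstep (Int.natCast_nonneg n) h
    refine (hfar k (-n) ?_).not_ge hkr
    have : (0 : ℝ) ≤ k := by exact_mod_cast hk.1
    rw [Int.cast_neg, Int.cast_natCast, sub_neg_eq_add, abs_of_nonneg (by positivity)]
    linarith
  have hright : a n ∉ Set.uIcc (a (-n)) (a 0) := fun h => by
    obtain ⟨k, hk, hkr⟩ := exists_mem_Icc_abs_sub_le_of_mem_uIcc hstep (by simp) h
    refine (hfar k n ?_).not_ge hkr
    have : (k : ℝ) ≤ 0 := by exact_mod_cast hk.2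
    rw [Int.cast_natCast, abs_of_nonpos (by linarith)]
    linarith
  simp only [Set.mem_uIcc] at hleft hright ⊢
  grind

theorem exists_abs_sub_le_of_linear_lower_bound (hstep : ∀ k, |a (k + 1) - a k| ≤ D)
    {c C : ℝ} (hc : 0 < c) (hlow : ∀ j k : ℤ, c * |(j : ℝ) - k| - C ≤ |a j - a k|) (r : ℝ) :
    ∃ k, |a k - r| ≤ D := by
  obtain ⟨n, hn⟩ := exists_nat_gt ((max D |r - a 0| + C) / c)
  rw [div_lt_iff₀ hc] at hn
  have hmid := mem_uIcc_of_linear_lower_bound hstep hc.le hlow (n := n) (by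
    linarith [le_max_left D |r - a 0|])
  have hend : ∀ j : ℤ, |(j : ℝ)| = n → |r - a 0| < |a j - a 0| := fun j hj => by
    have := hlow j 0
    rw [Int.cast_zero, sub_zero, hj] at this
    linarith [le_max_right D |r - a 0|]
  have hr : r ∈ Set.uIcc (a (-n)) (a n) := by
    have h₁ := hend (-n) (by simp)
    have h₂ := hend n (by simp)
    clear hend hlow hstep hn
    simp only [Set.mem_uIcc] at hmid ⊢
    grind
  obtain ⟨k, -, hk⟩ := exists_mem_Icc_abs_sub_le_of_mem_uIcc hstep (by simp) hr
  exact ⟨k, hk⟩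

end CoarsePath

section Orbit

variable {E L : Type*} [Group E] [PseudoMetricSpace L] [MulAction E L] [IsIsometricSMul E L]
  (t : E)

theorem dist_zpow_smul_zpow_smul (x : L) (j k : ℤ) :
    dist (t ^ j • x) (t ^ k • x) = dist x (t ^ (k - j) • x) := by
  rw [← dist_smul (t ^ j) x, smul_smul, ← zpow_add, add_sub_cancel]

theorem dist_zpow_neg_smul (x : L) (k : ℤ) : dist x (t ^ (-k) • x) = dist x (t ^ k • x) := by
  rw [← zero_sub, ← dist_zpow_smul_zpow_smul, zpow_zero, one_smul, dist_comm]

theorem dist_zpow_smul_le (x y : L) (k : ℤ) :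
    dist x (t ^ k • x) ≤ dist y (t ^ k • y) + 2 * dist x y := by
  have := dist_triangle4 x y (t ^ k • y) (t ^ k • x)
  rw [dist_smul, dist_comm y x] at this
  linarith

theorem exists_linear_lower_bound_dist_zpow_smul (x : L) {τ c : ℝ} (hc : c < τ)
    (hτ : Tendsto (fun n : ℕ => dist x (t ^ n • x) / n) atTop (𝓝 τ)) :
    ∃ C, ∀ k : ℤ, c * |(k : ℝ)| - C ≤ dist x (t ^ k • x) := by
  obtain ⟨N, hN⟩ := eventually_atTop.1 <|
    (hτ.eventually (lt_mem_nhds hc)).and (eventually_gt_atTop 0)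
  have hnat : ∀ n : ℕ, c * n - |c| * N ≤ dist x (t ^ n • x) := fun n => by
    rcases le_total N n with hn | hn
    · obtain ⟨hlt, hpos⟩ := hN n hn
      rw [lt_div_iff₀ (by exact_mod_cast hpos)] at hlt
      nlinarith [abs_nonneg c]
    · have : c * n ≤ |c| * N :=
        (mul_le_mul_of_nonneg_right (le_abs_self c) n.cast_nonneg).trans
          (mul_le_mul_of_nonneg_left (by exact_mod_cast hn) (abs_nonneg c))
      linarith [dist_nonneg (x := x) (y := t ^ n • x)]
  refine ⟨|c| * N, fun k => ?_⟩
  obtain ⟨n, rfl | rfl⟩ := Int.eq_nat_or_neg k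
  · simpa using hnat n
  · rw [dist_zpow_neg_smul, Int.cast_neg, abs_neg]
    simpa using hnat n

variable {c C : ℝ} {x : L}

theorem finite_setOf_dist_zpow_smul_le (hc : 0 < c)
    (hC : ∀ k : ℤ, c * |(k : ℝ)| - C ≤ dist x (t ^ k • x)) (y : L) (R : ℝ) :
    {k : ℤ | dist y (t ^ k • y) ≤ R}.Finite := by
  set B := (R + 2 * dist x y + C) / c
  refine (Set.finite_Icc (-⌈B⌉) ⌈B⌉).subset fun k hk => ?_
  have hkB : |(k : ℝ)| ≤ B := by
    rw [le_div_iff₀ hc]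
    linarith [hC k, dist_zpow_smul_le t x y k, hk.out]
  exact abs_le.1 (by exact_mod_cast hkB.trans (Int.le_ceil B))

theorem exists_dist_zpow_smul_le_of_quasiIsometry {q : L → ℝ} {K : ℝ} (hK : 0 < K)
    (hqup : ∀ x y : L, |q x - q y| ≤ K * dist x y + K)
    (hqlow : ∀ x y : L, (1 / K) * dist x y - K ≤ |q x - q y|) (hc : 0 < c)
    (hC : ∀ k : ℤ, c * |(k : ℝ)| - C ≤ dist x (t ^ k • x)) :
    ∃ D, ∀ z, ∃ k : ℤ, dist z (t ^ k • x) ≤ D := by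
  set D := K * dist x (t • x) + K
  have hstep : ∀ k : ℤ, |q (t ^ (k + 1) • x) - q (t ^ k • x)| ≤ D := fun k => by
    have := hqup (t ^ (k + 1) • x) (t ^ k • x)
    rwa [dist_comm, dist_zpow_smul_zpow_smul, add_sub_cancel_left, zpow_one] at this
  have hlow : ∀ j k : ℤ,
      c / K * |(j : ℝ) - k| - (C / K + K) ≤ |q (t ^ j • x) - q (t ^ k • x)| := fun j k => by
    have h := hC (k - j)
    rw [Int.cast_sub, abs_sub_comm] at h
    calc c / K * |(j : ℝ) - k| - (C / K + K) = 1 / K * (c * |(j : ℝ) - k| - C) - K := by ring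
      _ ≤ 1 / K * dist x (t ^ (k - j) • x) - K := by gcongr
      _ ≤ _ := by rw [← dist_zpow_smul_zpow_smul]; exact hqlow _ _
  refine ⟨K * (D + K), fun z => ?_⟩
  obtain ⟨k, hk⟩ := exists_abs_sub_le_of_linear_lower_bound hstep (div_pos hc hK) hlow (q z)
  refine ⟨k, ?_⟩
  calc dist z (t ^ k • x) = K * (1 / K * dist z (t ^ k • x)) := by field_simp
    _ ≤ K * (D + K) := by
      gcongr
      linarith [hqlow z (t ^ k • x), abs_sub_comm (q z) (q (t ^ k • x))]

end Orbit

theorem finite_setOf_map_mem_and_dist_smul_le {E G L : Type*} [Group E] [Group G]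
    [PseudoMetricSpace L] [MulAction E L] [IsIsometricSMul E L] (φ : E →* G) {t : E}
    (hker : φ.ker ≤ Subgroup.zpowers t) {y : L}
    (hfin : ∀ R, {k : ℤ | dist y (t ^ k • y) ≤ R}.Finite) {A : Set G} (hA : A.Finite) (R : ℝ) :
    {e : E | φ e ∈ A ∧ dist y (e • y) ≤ R}.Finite := by
  refine (hA.biUnion (t := fun g => {e : E | φ e = g ∧ dist y (e • y) ≤ R}) fun g _ => ?_).subset
    fun e he => Set.mem_biUnion he.1 ⟨rfl, he.2⟩
  rcases Set.eq_empty_or_nonempty {e : E | φ e = g ∧ dist y (e • y) ≤ R} with h | ⟨e₀, rfl, he₀⟩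
  · simp [h]
  refine ((hfin (2 * R)).image (e₀ * t ^ ·)).subset fun e ⟨he, hR⟩ => ?_
  obtain ⟨k, hk⟩ := Subgroup.mem_zpowers_iff.1 <| hker <| show φ (e₀⁻¹ * e) = 1 by
    rw [map_mul, map_inv, he, inv_mul_cancel]
  refine ⟨k, ?_, by simp [hk]⟩
  calc dist y (t ^ k • y) = dist (e₀ • y) (e • y) := by
        rw [hk, mul_smul, ← dist_smul e₀, smul_inv_smul]
    _ ≤ dist (e₀ • y) y + dist y (e • y) := dist_triangle _ _ _
    _ ≤ 2 * R := by rw [dist_comm]; linarith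

theorem central_extension_quasiline_action_proper_cobounded_general
    {E G L : Type*} [Group E] [Group G] [MetricSpace L] [MulAction E L]
    (hisoL : ∀ (e : E) (x y : L), dist (e • x) (e • y) = dist x y)
    (φ : E →* G) (hsurj : Function.Surjective φ)
    (t : E) (hker : φ.ker = Subgroup.zpowers t)
    (S : Set G) (hSfin : S.Finite) (hSgen : Subgroup.closure S = ⊤)
    -- L is quasi-isometric to ℝ
    (K : ℝ) (hK : 1 ≤ K) (q : L → ℝ)
    (hqup : ∀ x y : L, |q x - q y| ≤ K * dist x y + K)
    (hqlow : ∀ x y : L, (1 / K) * dist x y - K ≤ |q x - q y|)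
    -- τ_L(t) > 0
    (x₀ : L) (τ : ℝ) (hτpos : 0 < τ)
    (hτ : Tendsto (fun n : ℕ => dist x₀ (t ^ n • x₀) / n) atTop (𝓝 τ)) :
    -- metrically proper
    (∀ (p : G × L) (R : ℝ),
      {e : E | (wordLength S (p.1⁻¹ * (φ e * p.1)) : ℝ) + dist p.2 (e • p.2) ≤ R}.Finite) ∧
    -- cobounded
    (∃ R : ℝ, ∀ p : G × L, ∃ e : E,
      (wordLength S (p.1⁻¹ * φ e) : ℝ) + dist p.2 (e • x₀) ≤ R) := by
  have : IsIsometricSMul E L := ⟨fun e => Isometry.of_dist_eq (hisoL e)⟩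
  obtain ⟨C, hC⟩ := exists_linear_lower_bound_dist_zpow_smul t x₀ (half_lt_self hτpos) hτ
  refine ⟨fun ⟨g, y⟩ R => ?_, ?_⟩
  · have hA : {h | wordLength S (g⁻¹ * (h * g)) ≤ ⌊R⌋₊}.Finite :=
      (finite_setOf_wordLength_le hSfin hSgen _).preimage
        ((mul_right_injective g⁻¹).comp (mul_left_injective g)).injOn
    refine (finite_setOf_map_mem_and_dist_smul_le φ hker.le
      (finite_setOf_dist_zpow_smul_le t (half_pos hτpos) hC y) hA R).subset fun e he => ?_
    have hw := (wordLength S (g⁻¹ * (φ e * g))).cast_nonneg (α := ℝ)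
    exact ⟨Nat.le_floor (by linarith [dist_nonneg (x := y) (y := e • y), he.out]),
      by linarith [he.out]⟩
  · obtain ⟨D, hD⟩ := exists_dist_zpow_smul_le_of_quasiIsometry t (by linarith) hqup hqlow
      (half_pos hτpos) hC
    refine ⟨D, fun ⟨g, y⟩ => ?_⟩
    obtain ⟨e, rfl⟩ := hsurj g
    obtain ⟨k, hk⟩ := hD (e⁻¹ • y)
    have htk : φ (t ^ k) = 1 := hker.ge (Subgroup.zpow_mem_zpowers t k)
    refine ⟨e * t ^ k, ?_⟩
    rwa [map_mul, htk, mul_one, inv_mul_cancel, wordLength_one, Nat.cast_zero, zero_add, mul_smul,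
      ← dist_smul e⁻¹, inv_smul_smul]

/-- Let `φ : E → G` be a `ℤ`-central extension of a finitely generated group `G`, and
suppose `E` acts by isometries on a geodesic space `L` quasi-isometric to `ℝ` with
`τ_L(t) > 0` for `t` generating the kernel. Then the diagonal action of `E` on `G × L`
with the `ℓ¹`-product of a word metric and the metric of `L` is metrically proper and
cobounded. -/
theorem central_extension_quasiline_action_proper_cobounded
    {E G L : Type*} [Group E] [Group G] [MetricSpace L] [MulAction E L]
    (hisoL : ∀ (e : E) (x y : L), dist (e • x) (e • y) = dist x y)
    (φ : E →* G) (hsurj : Function.Surjective φ)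
    (t : E) (hker : φ.ker = Subgroup.zpowers t) (hcent : t ∈ Subgroup.center E)
    (S : Set G) (hSfin : S.Finite) (hSgen : Subgroup.closure S = ⊤)
    -- L is geodesic
    (hgeo : ∀ x y : L, ∃ c : ℝ → L, c 0 = x ∧ c (dist x y) = y ∧
      ∀ s ∈ Set.Icc (0 : ℝ) (dist x y), ∀ u ∈ Set.Icc (0 : ℝ) (dist x y),
        dist (c s) (c u) = |s - u|)
    -- L is quasi-isometric to ℝ
    (K : ℝ) (hK : 1 ≤ K) (q : L → ℝ)
    (hqup : ∀ x y : L, |q x - q y| ≤ K * dist x y + K)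
    (hqlow : ∀ x y : L, (1 / K) * dist x y - K ≤ |q x - q y|)
    (hqonto : ∀ r : ℝ, ∃ x : L, |q x - r| ≤ K)
    -- τ_L(t) > 0
    (x₀ : L) (τ : ℝ) (hτpos : 0 < τ)
    (hτ : Tendsto (fun n : ℕ => dist x₀ (t ^ n • x₀) / n) atTop (𝓝 τ)) :
    -- metrically proper
    (∀ (p : G × L) (R : ℝ),
      {e : E | (wordLength S (p.1⁻¹ * (φ e * p.1)) : ℝ) + dist p.2 (e • p.2) ≤ R}.Finite) ∧
    -- cobounded
    (∃ R : ℝ, ∀ p : G × L, ∃ e : E,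
      (wordLength S (p.1⁻¹ * φ e) : ℝ) + dist p.2 (e • x₀) ≤ R) :=
  central_extension_quasiline_action_proper_cobounded_general hisoL φ hsurj t hker S hSfin hSgen K
    hK q hqup hqlow x₀ τ hτpos hτ
end
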